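/- For every α ∈ [0,1] there exist pairwise comparable reconciled gene trees 𝒢₁, 𝒢₂, 𝒢₃, each using the lca-mapping, such that PLR(𝒢₁, 𝒢₃) > PLR(𝒢₁, 𝒢₂) + PLR(𝒢₂, 𝒢₃). In particular, PLR does not satisfy the triangle inequality, even under the equality relation ≃_d. -/

import Mathlib

open SimpleGraph

attribute [local instance] Classical.propDecidable

/-- A rooted tree: a finite connected acyclic graph with a distinguished root. -/
structure RTree (V : Type*) [Fintype V] where
  adj : SimpleGraph V
  isTree : adj.IsTree
  root : V

variable {V : Type*} [Fintype V]

/-- `Anc T a b` : `a` is an ancestor of `b` (i.e. `b ⪯ a`), expressed as: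
`a` lies on the (unique) path from the root to `b`. -/
def Anc (T : RTree V) (a b : V) : Prop :=
  T.adj.dist T.root b = T.adj.dist T.root a + T.adj.dist a b

/-- `IsChild T c p` : `c` is a child of `p`. -/
def IsChild (T : RTree V) (c p : V) : Prop :=
  T.adj.Adj c p ∧ Anc T p c

/-- The set of children of `v`. -/
def childSet (T : RTree V) (v : V) : Set V := {c | IsChild T c v}

/-- A leaf is a node with no children. -/
def IsLeaf (T : RTree V) (v : V) : Prop := ∀ c, ¬ IsChild T c v

/-- The clade of `v`: the set of leaves descending from `v`. -/
def clade (T : RTree V) (v : V) : Set V := {x | IsLeaf T x ∧ Anc T v x}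

/-- `w` is the lowest common ancestor of the set `X` in `T`. -/
def IsLCA (T : RTree V) (X : Set V) (w : V) : Prop :=
  (∀ x ∈ X, Anc T w x) ∧ ∀ w', (∀ x ∈ X, Anc T w' x) → Anc T w' w

/-- A species tree is a rooted binary tree: every internal node has exactly two children. -/
def IsSpeciesTree (S : RTree V) : Prop :=
  ∀ v, ¬ IsLeaf S v → (childSet S v).ncard = 2

/-- Number of leaves of a rooted tree. -/
noncomputable def numLeaves (T : RTree V) : ℕ := {v | IsLeaf T v}.ncard

/-- `Hsum S` = `H(S)`: the sum of root-to-internal-node distances in `S`. -/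
noncomputable def Hsum (S : RTree V) : ℕ :=
  ∑ v : V, if IsLeaf S v then 0 else S.adj.dist S.root v

inductive Evt | dup | spec | extant
deriving DecidableEq

/-- A reconciled gene tree with species tree `S`, whose leaves are labeled bijectively by
the set of genes `Γ`. -/
structure Recon (Γ : Type*) (VG : Type*) (VS : Type*) [Fintype VG] [Fintype VS]
    (S : RTree VS) where
  tree : RTree VG
  geneLeaf : Γ → VG
  geneLeaf_inj : Function.Injective geneLeaf
  geneLeaf_range : ∀ v, IsLeaf tree v ↔ ∃ g, geneLeaf g = v
  μ : VG → VS
  lbl : VG → Evt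
  internal_children : ∀ v, ¬ IsLeaf tree v → 2 ≤ (childSet tree v).ncard
  leaf_species : ∀ v, IsLeaf tree v → IsLeaf S (μ v)
  leaf_lbl : ∀ v, IsLeaf tree v → lbl v = Evt.extant
  internal_lbl : ∀ v, ¬ IsLeaf tree v → lbl v = Evt.dup ∨ lbl v = Evt.spec
  time_consistent : ∀ a b, Anc tree a b → Anc S (μ a) (μ b)
  spec_two_children : ∀ v, lbl v = Evt.spec →
    ¬ IsLeaf S (μ v) ∧ (childSet tree v).ncard = 2
  spec_separates : ∀ v, lbl v = Evt.spec →
    ∀ v₁ v₂, IsChild tree v₁ v → IsChild tree v₂ v → v₁ ≠ v₂ →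
      ∃ s₁ s₂, IsChild S s₁ (μ v) ∧ IsChild S s₂ (μ v) ∧ s₁ ≠ s₂ ∧
        ((Anc S s₁ (μ v₁) ∧ Anc S s₂ (μ v₂)) ∨ (Anc S s₂ (μ v₁) ∧ Anc S s₁ (μ v₂)))

variable {Γ : Type*} {VS VG₁ VG₂ : Type*} [Fintype VS] [Fintype VG₁] [Fintype VG₂]
  {S : RTree VS}

/-- The clade of a gene tree node, as a set of genes. -/
def gclade (𝒢 : Recon Γ VG₁ VS S) (v : VG₁) : Set Γ :=
  {g | Anc 𝒢.tree v (𝒢.geneLeaf g)}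

/-- Two reconciled gene trees (over the same species tree and gene set) are comparable if
corresponding extant genes map to the same species. -/
def Comparable (𝒢₁ : Recon Γ VG₁ VS S) (𝒢₂ : Recon Γ VG₂ VS S) : Prop :=
  ∀ g, 𝒢₁.μ (𝒢₁.geneLeaf g) = 𝒢₂.μ (𝒢₂.geneLeaf g)

/-- `m` is the correspondence map `v ↦ lca_{G₂}(L(G₁(v)))`. -/
def IsLcaMap (𝒢₁ : Recon Γ VG₁ VS S) (𝒢₂ : Recon Γ VG₂ VS S) (m : VG₁ → VG₂) : Prop :=
  ∀ v, IsLCA 𝒢₂.tree (𝒢₂.geneLeaf '' gclade 𝒢₁ v) (m v)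

/-- `μ` is the lca-mapping: every node maps to the lca of the species of its leaf descendants. -/
def UsesLcaMapping (𝒢 : Recon Γ VG₁ VS S) : Prop :=
  ∀ v, IsLCA S (𝒢.μ '' clade 𝒢.tree v) (𝒢.μ v)

/-- The path component `d_path(𝒢₁,𝒢₂)` (with `m` the lca correspondence map). -/
noncomputable def dPath (𝒢₁ : Recon Γ VG₁ VS S) (𝒢₂ : Recon Γ VG₂ VS S)
    (m : VG₁ → VG₂) : ℕ :=
  ∑ v : VG₁, S.adj.dist (𝒢₁.μ v) (𝒢₂.μ (m v))

/-- The label component `d_lbl(𝒢₁,𝒢₂)`. -/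
noncomputable def dLbl (𝒢₁ : Recon Γ VG₁ VS S) (𝒢₂ : Recon Γ VG₂ VS S)
    (m : VG₁ → VG₂) : ℕ :=
  {v : VG₁ | 𝒢₁.lbl v ≠ 𝒢₂.lbl (m v)}.ncard

/-- The asymmetric dissimilarity `d_asym = α·d_path + (1−α)·d_lbl`. -/
noncomputable def dAsym (α : ℝ) (𝒢₁ : Recon Γ VG₁ VS S) (𝒢₂ : Recon Γ VG₂ VS S)
    (m : VG₁ → VG₂) : ℝ :=
  α * (dPath 𝒢₁ 𝒢₂ m : ℝ) + (1 - α) * (dLbl 𝒢₁ 𝒢₂ m : ℝ)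

/-- The Path-Label Reconciliation dissimilarity `PLR(𝒢₁,𝒢₂)`, where `m₁₂`, `m₂₁` are the
lca correspondence maps in the two directions. -/
noncomputable def PLR (α : ℝ) (𝒢₁ : Recon Γ VG₁ VS S) (𝒢₂ : Recon Γ VG₂ VS S)
    (m₁₂ : VG₁ → VG₂) (m₂₁ : VG₂ → VG₁) : ℝ :=
  dAsym α 𝒢₁ 𝒢₂ m₁₂ + dAsym α 𝒢₂ 𝒢₁ m₂₁

/-- An edge `uv` (with `u` the parent of `v`) is redundant if both endpoints are duplications
mapped to the same species. -/
def RedundantEdge (𝒢 : Recon Γ VG₁ VS S) (u v : VG₁) : Prop :=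
  IsChild 𝒢.tree v u ∧ 𝒢.μ u = 𝒢.μ v ∧ 𝒢.lbl u = Evt.dup ∧ 𝒢.lbl v = Evt.dup

/-- A reconciled gene tree is least duplication-resolved if it has no redundant edge. -/
def LeastDupResolved (𝒢 : Recon Γ VG₁ VS S) : Prop :=
  ∀ u v, ¬ RedundantEdge 𝒢 u v

/-- `𝒢'` is obtained from `𝒢` by contracting the edge `uv` (`u` the parent of `v`), i.e.
deleting `v` and attaching its children to `u`; `φ` is the corresponding quotient map. -/
def IsContractionOf (𝒢 : Recon Γ VG₁ VS S) (u v : VG₁) (𝒢' : Recon Γ VG₂ VS S)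
    (φ : VG₁ → VG₂) : Prop :=
  Function.Surjective φ ∧
  φ u = φ v ∧
  (∀ a b, φ a = φ b → a = b ∨ (a = u ∧ b = v) ∨ (a = v ∧ b = u)) ∧
  (∀ x y, 𝒢'.tree.adj.Adj x y ↔
    ∃ a b, φ a = x ∧ φ b = y ∧ 𝒢.tree.adj.Adj a b ∧ ¬(a = u ∧ b = v) ∧ ¬(a = v ∧ b = u)) ∧
  𝒢'.tree.root = φ 𝒢.tree.root ∧
  (∀ g, 𝒢'.geneLeaf g = φ (𝒢.geneLeaf g)) ∧
  (∀ a, 𝒢'.μ (φ a) = 𝒢.μ a) ∧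
  (∀ a, 𝒢'.lbl (φ a) = 𝒢.lbl a)

/-- Symmetrized redundancy relation on nodes. -/
def RedundantAdj (𝒢 : Recon Γ VG₁ VS S) (a b : VG₁) : Prop :=
  RedundantEdge 𝒢 a b ∨ RedundantEdge 𝒢 b a

/-- `𝒢'` is the least duplication-resolved tree `LR(𝒢)` obtained by contracting every
redundant edge of `𝒢`; `φ` is the corresponding quotient map. -/
def IsLROf (𝒢 : Recon Γ VG₁ VS S) (𝒢' : Recon Γ VG₂ VS S) (φ : VG₁ → VG₂) : Prop :=
  Function.Surjective φ ∧
  (∀ a b, φ a = φ b ↔ Relation.EqvGen (RedundantAdj 𝒢) a b) ∧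
  (∀ x y, 𝒢'.tree.adj.Adj x y ↔
    ∃ a b, φ a = x ∧ φ b = y ∧ 𝒢.tree.adj.Adj a b ∧ ¬ RedundantAdj 𝒢 a b) ∧
  𝒢'.tree.root = φ 𝒢.tree.root ∧
  (∀ g, 𝒢'.geneLeaf g = φ (𝒢.geneLeaf g)) ∧
  (∀ a, 𝒢'.μ (φ a) = 𝒢.μ a) ∧
  (∀ a, 𝒢'.lbl (φ a) = 𝒢.lbl a)

/-- Isomorphism of reconciled gene trees: a leaf-fixing bijection preserving edges,
species maps and event labels. -/
def ReconIso (𝒢₁ : Recon Γ VG₁ VS S) (𝒢₂ : Recon Γ VG₂ VS S) : Prop :=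
  ∃ φ : VG₁ ≃ VG₂,
    (∀ g, φ (𝒢₁.geneLeaf g) = 𝒢₂.geneLeaf g) ∧
    (∀ a b, 𝒢₂.tree.adj.Adj (φ a) (φ b) ↔ 𝒢₁.tree.adj.Adj a b) ∧
    (∀ v, 𝒢₂.μ (φ v) = 𝒢₁.μ v) ∧
    (∀ v, 𝒢₂.lbl (φ v) = 𝒢₁.lbl v)

/-- Exactly one gene per species: the gene set is the set of species leaves, and each gene
resides in its own species. -/
def OneGenePerSpecies (𝒢 : Recon {s : VS // IsLeaf S s} VG₁ VS S) : Prop :=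
  ∀ g, 𝒢.μ (𝒢.geneLeaf g) = g.1

/-!
Over the species tree `((A,B),C)` take genes `a₀, a₁` in `A`, `b` in `B`, `c` in `C` and
* `𝒢₁ = dup(a₀, dup(a₁, b, c))`, both duplications at the root species,
* `𝒢₂ = dup(dup(a₀, a₁, b), c)`, the lower duplication at `AB`,
* `𝒢₃ = spec(dup(a₀, dup(a₁, b)), c)`, both duplications at `AB`.
`𝒢₂` differs from `𝒢₁` only by the species of one duplication and from `𝒢₃` only by the root
label (its `AB`-node absorbs both `AB`-duplications of `𝒢₃`), so `PLR(𝒢₁,𝒢₂) = α` and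
`PLR(𝒢₂,𝒢₃) = 2(1 - α)`. Compared directly, the node `{a₁, b, c}` of `𝒢₁` lands on the speciation
root of `𝒢₃`, and both `AB`-duplications of `𝒢₃` land on root duplications of `𝒢₁`, so
`PLR(𝒢₁,𝒢₃) = 3 - α`, one more than the sum for every `α`.
-/

section

-- `decide` needs the computable `Decidable` instances, not the classical one made local above.
attribute [-instance] Classical.propDecidable

/-- A rooted tree given by its parent array; `depth` certifies that iterating `parent` reaches
`root`, which makes the tree axioms checkable by `decide`. -/
structure ParentTree (α : Type*) where
  parent : α → α
  root : α
  depth : α → ℕ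
  parent_root : parent root = root
  depth_root : depth root = 0
  depth_parent : ∀ v, v ≠ root → depth v = depth (parent v) + 1

namespace ParentTree

variable {α : Type*} (t : ParentTree α)

def graph : SimpleGraph α := .fromRel fun a b => t.parent a = b

def IsAncestor (a b : α) : Prop :=
  t.depth a ≤ t.depth b ∧ t.parent^[t.depth b - t.depth a] b = a

instance [DecidableEq α] (a b : α) : Decidable (t.IsAncestor a b) :=
  inferInstanceAs (Decidable (_ ∧ _))

variable {t}

lemma ne_root_of_parent_ne {v : α} (h : t.parent v ≠ v) : v ≠ t.root := by
  rintro rfl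
  exact h t.parent_root

lemma graph_adj_parent {v : α} (hv : v ≠ t.root) : t.graph.Adj v (t.parent v) := by
  refine ⟨fun h => ?_, Or.inl rfl⟩
  have := t.depth_parent v hv
  rw [← h] at this
  omega

lemma depth_eq_of_parent_eq {a b : α} (hab : a ≠ b) (h : t.parent a = b) :
    t.depth a = t.depth b + 1 :=
  h ▸ t.depth_parent a (ne_root_of_parent_ne (h ▸ hab.symm))

lemma graph_adj_depth {a b : α} (h : t.graph.Adj a b) :
    t.depth a = t.depth b + 1 ∨ t.depth b = t.depth a + 1 :=
  h.2.imp (depth_eq_of_parent_eq h.1) (depth_eq_of_parent_eq h.1.symm)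

lemma depth_le_depth_add_length {u v : α} (w : t.graph.Walk u v) :
    t.depth u ≤ t.depth v + w.length := by
  induction w with
  | nil => simp
  | cons h _ ih =>
    have := graph_adj_depth h
    simp only [SimpleGraph.Walk.length_cons]
    omega

lemma exists_walk_parent_iterate (b : α) (k : ℕ) :
    ∃ w : t.graph.Walk b (t.parent^[k] b), w.length ≤ k := by
  induction k with
  | zero => exact ⟨.nil, le_rfl⟩
  | succ k ih =>
    obtain ⟨w, hw⟩ := ih
    rw [Function.iterate_succ_apply']
    by_cases h : t.parent (t.parent^[k] b) = t.parent^[k] b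
    · exact ⟨w.copy rfl (by rw [h]), by rw [SimpleGraph.Walk.length_copy]; omega⟩
    · exact ⟨w.concat (graph_adj_parent (ne_root_of_parent_ne h)),
        by rw [SimpleGraph.Walk.length_concat]; omega⟩

lemma parent_iterate_depth (v : α) : t.parent^[t.depth v] v = t.root := by
  induction h : t.depth v generalizing v with
  | zero => by_contra hv; have := t.depth_parent v hv; omega
  | succ d ih =>
    have hv : v ≠ t.root := by rintro rfl; rw [t.depth_root] at h; omega
    rw [Function.iterate_succ_apply, ih]
    have := t.depth_parent v hv
    omega

lemma isAncestor_root (v : α) : t.IsAncestor t.root v :=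
  ⟨by rw [t.depth_root]; exact Nat.zero_le _,
    by rw [t.depth_root, Nat.sub_zero]; exact parent_iterate_depth v⟩

lemma graph_reachable_root (v : α) : t.graph.Reachable v t.root := by
  obtain ⟨w, -⟩ := exists_walk_parent_iterate (t := t) v (t.depth v)
  exact ⟨parent_iterate_depth v ▸ w⟩

lemma graph_connected : t.graph.Connected :=
  (SimpleGraph.connected_iff_exists_forall_reachable _).2
    ⟨t.root, fun v => (graph_reachable_root v).symm⟩

lemma graph_dist_of_isAncestor {a b : α} (h : t.IsAncestor a b) :
    t.graph.dist a b = t.depth b - t.depth a := by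
  obtain ⟨hle, hab⟩ := h
  apply le_antisymm
  · obtain ⟨w, hw⟩ := exists_walk_parent_iterate (t := t) b (t.depth b - t.depth a)
    have := (SimpleGraph.dist_le w).trans hw
    rw [hab, SimpleGraph.dist_comm] at this
    omega
  · obtain ⟨p, hp⟩ := (graph_connected (t := t)).exists_walk_length_eq_dist b a
    have := depth_le_depth_add_length p
    rw [SimpleGraph.dist_comm]
    omega

lemma graph_dist_root (v : α) : t.graph.dist t.root v = t.depth v := by
  rw [graph_dist_of_isAncestor (isAncestor_root v), t.depth_root, Nat.sub_zero]

lemma parent_iterate_length_of_walk {b a : α} (w : t.graph.Walk b a)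
    (h : w.length + t.depth a = t.depth b) : t.parent^[w.length] b = a := by
  induction w with
  | nil => rfl
  | cons hxy p ih =>
    simp only [SimpleGraph.Walk.length_cons] at h ⊢
    rcases hxy.2 with hx | hy
    · have := depth_eq_of_parent_eq hxy.1 hx
      rw [Function.iterate_succ_apply, hx, ih (by omega)]
    · have := depth_eq_of_parent_eq hxy.1.symm hy
      have := depth_le_depth_add_length p
      omega

lemma card_edgeSet_add_one [Fintype α] : Nat.card t.graph.edgeSet + 1 = Nat.card α := by
  let f : {v // v ≠ t.root} → t.graph.edgeSet :=
    fun v => ⟨s(v.1, t.parent v), graph_adj_parent v.2⟩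
  have hf : f.Bijective := by
    refine ⟨fun v w hvw => ?_, fun ⟨e, he⟩ => ?_⟩
    · rcases Sym2.eq_iff.1 (congrArg Subtype.val hvw) with ⟨h, -⟩ | ⟨hv, hw⟩
      · exact Subtype.ext h
      · have hv' := t.depth_parent v v.2
        have hw' := t.depth_parent w w.2
        rw [hw] at hv'
        rw [← hv] at hw'
        omega
    · induction e using Sym2.ind with | h a b => ?_
      obtain ⟨hab, ha | hb⟩ := (SimpleGraph.mem_edgeSet _).1 he
      · exact ⟨⟨a, ne_root_of_parent_ne (ha ▸ hab.symm)⟩, by simp [f, ha]⟩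
      · exact ⟨⟨b, ne_root_of_parent_ne (hb ▸ hab)⟩, by simp [f, hb, Sym2.eq_swap]⟩
  classical
  rw [← Nat.card_congr (Equiv.ofBijective f hf)]
  simp only [Nat.card_eq_fintype_card, Fintype.card_subtype_compl, Fintype.card_unique]
  have := Fintype.card_pos_iff.2 ⟨t.root⟩
  omega

lemma graph_isTree [Fintype α] : t.graph.IsTree :=
  SimpleGraph.isTree_iff_connected_and_card.2 ⟨graph_connected, card_edgeSet_add_one⟩

variable (t) in
def toRTree [Fintype α] : RTree α := ⟨t.graph, graph_isTree, t.root⟩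

variable [Fintype α]

lemma anc_toRTree_iff (a b : α) : Anc t.toRTree a b ↔ t.IsAncestor a b := by
  change t.graph.dist t.root b = t.graph.dist t.root a + t.graph.dist a b ↔ _
  rw [graph_dist_root, graph_dist_root]
  constructor
  · intro h
    obtain ⟨p, hp⟩ := (graph_connected (t := t)).exists_walk_length_eq_dist b a
    rw [SimpleGraph.dist_comm] at hp
    have hlen : p.length = t.depth b - t.depth a := by omega
    exact ⟨by omega, hlen ▸ parent_iterate_length_of_walk p (by omega)⟩
  · intro h
    rw [graph_dist_of_isAncestor h]
    have := h.1
    omega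

lemma isChild_toRTree_iff (c v : α) : IsChild t.toRTree c v ↔ c ≠ v ∧ t.parent c = v := by
  rw [IsChild, anc_toRTree_iff]
  constructor
  · rintro ⟨⟨hne, hc | hv⟩, hanc⟩
    · exact ⟨hne, hc⟩
    · have := depth_eq_of_parent_eq hne.symm hv
      have := hanc.1
      omega
  · rintro ⟨hne, hc⟩
    have := depth_eq_of_parent_eq hne hc
    exact ⟨⟨hne, .inl hc⟩, by omega, by simpa [this] using hc⟩

lemma isLeaf_toRTree_iff (v : α) : IsLeaf t.toRTree v ↔ ∀ c, ¬(c ≠ v ∧ t.parent c = v) := by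
  simp only [IsLeaf, isChild_toRTree_iff]

lemma ncard_childSet_toRTree [DecidableEq α] (v : α) :
    (childSet t.toRTree v).ncard = (Finset.univ.filter fun c => c ≠ v ∧ t.parent c = v).card := by
  rw [← Set.ncard_coe_finset]
  congr 1
  ext c
  simp [childSet, isChild_toRTree_iff]

end ParentTree

lemma dLbl_eq_card (𝒢₁ : Recon Γ VG₁ VS S) (𝒢₂ : Recon Γ VG₂ VS S) (m : VG₁ → VG₂) :
    dLbl 𝒢₁ 𝒢₂ m = (Finset.univ.filter fun v => 𝒢₁.lbl v ≠ 𝒢₂.lbl (m v)).card := by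
  rw [dLbl, ← Set.ncard_coe_finset, Finset.coe_filter_univ]

lemma dPath_eq_sum_depth_sub {s : ParentTree VS} (𝒢₁ : Recon Γ VG₁ VS s.toRTree)
    (𝒢₂ : Recon Γ VG₂ VS s.toRTree) (m : VG₁ → VG₂)
    (h : ∀ v, s.IsAncestor (𝒢₂.μ (m v)) (𝒢₁.μ v)) :
    dPath 𝒢₁ 𝒢₂ m = ∑ v, (s.depth (𝒢₁.μ v) - s.depth (𝒢₂.μ (m v))) := by
  refine Finset.sum_congr rfl fun v _ => ?_
  rw [SimpleGraph.dist_comm]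
  exact ParentTree.graph_dist_of_isAncestor (h v)

namespace PLRCounterexample

open ParentTree

/-- The species tree `((A,B),C)`: `0` is the root, `1 = AB`, `2 = A`, `3 = B`, `4 = C`. -/
def speciesTree : ParentTree (Fin 5) :=
  ⟨![0, 0, 1, 1, 0], 0, ![0, 1, 2, 2, 1], by decide, by decide, by decide⟩

lemma isSpeciesTree_speciesTree : IsSpeciesTree speciesTree.toRTree := by
  simp only [IsSpeciesTree, isLeaf_toRTree_iff, ncard_childSet_toRTree]
  decide

def geneTree₁ : Recon (Fin 4) (Fin 6) (Fin 5) speciesTree.toRTree := by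
  apply Recon.mk
    (tree := toRTree ⟨![0, 0, 0, 1, 1, 1], 0, ![0, 1, 1, 2, 2, 2], by decide, by decide, by decide⟩)
    (geneLeaf := ![2, 3, 4, 5])
    (μ := ![0, 0, 2, 2, 3, 4])
    (lbl := ![.dup, .dup, .extant, .extant, .extant, .extant]) <;>
  simp only [Function.Injective, isLeaf_toRTree_iff, isChild_toRTree_iff, anc_toRTree_iff,
    ncard_childSet_toRTree] <;>
  decide

def geneTree₂ : Recon (Fin 4) (Fin 6) (Fin 5) speciesTree.toRTree := by
  apply Recon.mk
    (tree := toRTree ⟨![0, 0, 1, 1, 1, 0], 0, ![0, 1, 2, 2, 2, 1], by decide, by decide, by decide⟩)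
    (geneLeaf := ![2, 3, 4, 5])
    (μ := ![0, 1, 2, 2, 3, 4])
    (lbl := ![.dup, .dup, .extant, .extant, .extant, .extant]) <;>
  simp only [Function.Injective, isLeaf_toRTree_iff, isChild_toRTree_iff, anc_toRTree_iff,
    ncard_childSet_toRTree] <;>
  decide

def geneTree₃ : Recon (Fin 4) (Fin 7) (Fin 5) speciesTree.toRTree := by
  apply Recon.mk
    (tree := toRTree
      ⟨![0, 0, 1, 1, 2, 2, 0], 0, ![0, 1, 2, 2, 3, 3, 1], by decide, by decide, by decide⟩)
    (geneLeaf := ![3, 4, 5, 6])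
    (μ := ![0, 1, 1, 2, 2, 3, 4])
    (lbl := ![.spec, .dup, .dup, .extant, .extant, .extant, .extant]) <;>
  simp only [Function.Injective, isLeaf_toRTree_iff, isChild_toRTree_iff, anc_toRTree_iff,
    ncard_childSet_toRTree] <;>
  decide

def lcaMap₁₂ : Fin 6 → Fin 6 := ![0, 0, 2, 3, 4, 5]
def lcaMap₂₁ : Fin 6 → Fin 6 := ![0, 0, 2, 3, 4, 5]
def lcaMap₂₃ : Fin 6 → Fin 7 := ![0, 1, 3, 4, 5, 6]
def lcaMap₃₂ : Fin 7 → Fin 6 := ![0, 1, 1, 2, 3, 4, 5]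
def lcaMap₁₃ : Fin 6 → Fin 7 := ![0, 0, 3, 4, 5, 6]
def lcaMap₃₁ : Fin 7 → Fin 6 := ![0, 0, 1, 2, 3, 4, 5]

lemma comparable_geneTrees :
    Comparable geneTree₁ geneTree₂ ∧ Comparable geneTree₂ geneTree₃ ∧
      Comparable geneTree₁ geneTree₃ := by
  refine ⟨?_, ?_, ?_⟩ <;> unfold Comparable <;> decide

lemma usesLcaMapping_geneTrees :
    UsesLcaMapping geneTree₁ ∧ UsesLcaMapping geneTree₂ ∧ UsesLcaMapping geneTree₃ := by
  refine ⟨?_, ?_, ?_⟩ <;>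
  simp only [UsesLcaMapping, IsLCA, clade, Set.forall_mem_image, Set.mem_ofPred_eq,
    geneTree₁, geneTree₂, geneTree₃, anc_toRTree_iff, isLeaf_toRTree_iff] <;>
  decide

lemma isLcaMap_lcaMaps :
    IsLcaMap geneTree₁ geneTree₂ lcaMap₁₂ ∧ IsLcaMap geneTree₂ geneTree₁ lcaMap₂₁ ∧
      IsLcaMap geneTree₂ geneTree₃ lcaMap₂₃ ∧ IsLcaMap geneTree₃ geneTree₂ lcaMap₃₂ ∧
      IsLcaMap geneTree₁ geneTree₃ lcaMap₁₃ ∧ IsLcaMap geneTree₃ geneTree₁ lcaMap₃₁ := by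
  refine ⟨?_, ?_, ?_, ?_, ?_, ?_⟩ <;>
  simp only [IsLcaMap, IsLCA, gclade, Set.forall_mem_image, Set.mem_ofPred_eq,
    geneTree₁, geneTree₂, geneTree₃, anc_toRTree_iff] <;>
  decide

lemma PLR_geneTree₁_geneTree₂ (α : ℝ) : PLR α geneTree₁ geneTree₂ lcaMap₁₂ lcaMap₂₁ = α := by
  have p₁₂ : dPath geneTree₁ geneTree₂ lcaMap₁₂ = 0 := by rw [dPath_eq_sum_depth_sub] <;> decide
  have p₂₁ : dPath geneTree₂ geneTree₁ lcaMap₂₁ = 1 := by rw [dPath_eq_sum_depth_sub] <;> decide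
  have l₁₂ : dLbl geneTree₁ geneTree₂ lcaMap₁₂ = 0 := by rw [dLbl_eq_card]; decide
  have l₂₁ : dLbl geneTree₂ geneTree₁ lcaMap₂₁ = 0 := by rw [dLbl_eq_card]; decide
  simp only [PLR, dAsym, p₁₂, p₂₁, l₁₂, l₂₁]
  push_cast
  ring

lemma PLR_geneTree₂_geneTree₃ (α : ℝ) :
    PLR α geneTree₂ geneTree₃ lcaMap₂₃ lcaMap₃₂ = 2 * (1 - α) := by
  have p₂₃ : dPath geneTree₂ geneTree₃ lcaMap₂₃ = 0 := by rw [dPath_eq_sum_depth_sub] <;> decide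
  have p₃₂ : dPath geneTree₃ geneTree₂ lcaMap₃₂ = 0 := by rw [dPath_eq_sum_depth_sub] <;> decide
  have l₂₃ : dLbl geneTree₂ geneTree₃ lcaMap₂₃ = 1 := by rw [dLbl_eq_card]; decide
  have l₃₂ : dLbl geneTree₃ geneTree₂ lcaMap₃₂ = 1 := by rw [dLbl_eq_card]; decide
  simp only [PLR, dAsym, p₂₃, p₃₂, l₂₃, l₃₂]
  push_cast
  ring

lemma PLR_geneTree₁_geneTree₃ (α : ℝ) : PLR α geneTree₁ geneTree₃ lcaMap₁₃ lcaMap₃₁ = 3 - α := by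
  have p₁₃ : dPath geneTree₁ geneTree₃ lcaMap₁₃ = 0 := by rw [dPath_eq_sum_depth_sub] <;> decide
  have p₃₁ : dPath geneTree₃ geneTree₁ lcaMap₃₁ = 2 := by rw [dPath_eq_sum_depth_sub] <;> decide
  have l₁₃ : dLbl geneTree₁ geneTree₃ lcaMap₁₃ = 2 := by rw [dLbl_eq_card]; decide
  have l₃₁ : dLbl geneTree₃ geneTree₁ lcaMap₃₁ = 1 := by rw [dLbl_eq_card]; decide
  simp only [PLR, dAsym, p₁₃, p₃₁, l₁₃, l₃₁]
  push_cast
  ring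

end PLRCounterexample

end

theorem stmt6_general (α : ℝ) :
    ∃ (nS nΓ n₁ n₂ n₃ : ℕ) (S : RTree (Fin nS)) (_ : IsSpeciesTree S)
      (𝒢₁ : Recon (Fin nΓ) (Fin n₁) (Fin nS) S) (𝒢₂ : Recon (Fin nΓ) (Fin n₂) (Fin nS) S)
      (𝒢₃ : Recon (Fin nΓ) (Fin n₃) (Fin nS) S)
      (m₁₂ : Fin n₁ → Fin n₂) (m₂₁ : Fin n₂ → Fin n₁)
      (m₂₃ : Fin n₂ → Fin n₃) (m₃₂ : Fin n₃ → Fin n₂)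
      (m₁₃ : Fin n₁ → Fin n₃) (m₃₁ : Fin n₃ → Fin n₁),
      Comparable 𝒢₁ 𝒢₂ ∧ Comparable 𝒢₂ 𝒢₃ ∧ Comparable 𝒢₁ 𝒢₃ ∧
      UsesLcaMapping 𝒢₁ ∧ UsesLcaMapping 𝒢₂ ∧ UsesLcaMapping 𝒢₃ ∧
      IsLcaMap 𝒢₁ 𝒢₂ m₁₂ ∧ IsLcaMap 𝒢₂ 𝒢₁ m₂₁ ∧
      IsLcaMap 𝒢₂ 𝒢₃ m₂₃ ∧ IsLcaMap 𝒢₃ 𝒢₂ m₃₂ ∧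
      IsLcaMap 𝒢₁ 𝒢₃ m₁₃ ∧ IsLcaMap 𝒢₃ 𝒢₁ m₃₁ ∧
      PLR α 𝒢₁ 𝒢₂ m₁₂ m₂₁ + PLR α 𝒢₂ 𝒢₃ m₂₃ m₃₂ < PLR α 𝒢₁ 𝒢₃ m₁₃ m₃₁ := by
  open PLRCounterexample in
  obtain ⟨c₁₂, c₂₃, c₁₃⟩ := comparable_geneTrees
  obtain ⟨u₁, u₂, u₃⟩ := usesLcaMapping_geneTrees
  obtain ⟨h₁₂, h₂₁, h₂₃, h₃₂, h₁₃, h₃₁⟩ := isLcaMap_lcaMaps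
  refine ⟨5, 4, 6, 6, 7, _, isSpeciesTree_speciesTree, geneTree₁, geneTree₂, geneTree₃,
    _, _, _, _, _, _, c₁₂, c₂₃, c₁₃, u₁, u₂, u₃, h₁₂, h₂₁, h₂₃, h₃₂, h₁₃, h₃₁, ?_⟩
  rw [PLR_geneTree₁_geneTree₂, PLR_geneTree₂_geneTree₃, PLR_geneTree₁_geneTree₃]
  linarith

/-- PLR does not satisfy the triangle inequality: for every `α ∈ [0,1]` there
exist pairwise comparable reconciled gene trees, each using the lca-mapping, violating it. -/
theorem stmt6 (α : ℝ) (hα₀ : 0 ≤ α) (hα₁ : α ≤ 1) :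
    ∃ (nS nΓ n₁ n₂ n₃ : ℕ) (S : RTree (Fin nS)) (_ : IsSpeciesTree S)
      (𝒢₁ : Recon (Fin nΓ) (Fin n₁) (Fin nS) S) (𝒢₂ : Recon (Fin nΓ) (Fin n₂) (Fin nS) S)
      (𝒢₃ : Recon (Fin nΓ) (Fin n₃) (Fin nS) S)
      (m₁₂ : Fin n₁ → Fin n₂) (m₂₁ : Fin n₂ → Fin n₁)
      (m₂₃ : Fin n₂ → Fin n₃) (m₃₂ : Fin n₃ → Fin n₂)
      (m₁₃ : Fin n₁ → Fin n₃) (m₃₁ : Fin n₃ → Fin n₁),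
      Comparable 𝒢₁ 𝒢₂ ∧ Comparable 𝒢₂ 𝒢₃ ∧ Comparable 𝒢₁ 𝒢₃ ∧
      UsesLcaMapping 𝒢₁ ∧ UsesLcaMapping 𝒢₂ ∧ UsesLcaMapping 𝒢₃ ∧
      IsLcaMap 𝒢₁ 𝒢₂ m₁₂ ∧ IsLcaMap 𝒢₂ 𝒢₁ m₂₁ ∧
      IsLcaMap 𝒢₂ 𝒢₃ m₂₃ ∧ IsLcaMap 𝒢₃ 𝒢₂ m₃₂ ∧
      IsLcaMap 𝒢₁ 𝒢₃ m₁₃ ∧ IsLcaMap 𝒢₃ 𝒢₁ m₃₁ ∧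
      PLR α 𝒢₁ 𝒢₂ m₁₂ m₂₁ + PLR α 𝒢₂ 𝒢₃ m₂₃ m₃₂ < PLR α 𝒢₁ 𝒢₃ m₁₃ m₃₁ :=
  stmt6_general α
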